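/- Let μ ∈ M_s(A²) with μ_{ij} > 0 for all i, j ∈ A = {1,...,n}, let a_{ij} = μ_{ij}/μ̄_i be the associated transition matrix, and let φ ∈ S_n. Then inf{ D_c(ν‖μ) : ν ∈ M_s(A²), ν̄ = φ } = sup_{u > 0} Σ_{i=1}^n φ_i log(u_i / (Au)_i), where the supremum is over u ∈ ℝ^n with u_i > 0 for all i and (Au)_i = Σ_j a_{ij} u_j. -/

import Mathlib

open Finset

/-- The simplex `S_n` of probability vectors. -/
def simplex (n : ℕ) : Set (Fin n → ℝ) := {p | (∀ i, 0 ≤ p i) ∧ ∑ i, p i = 1}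

/-- Marginal of a doublet distribution. -/
def marg {n : ℕ} (ν : Fin n → Fin n → ℝ) : Fin n → ℝ := fun i => ∑ j, ν i j

def IsProb2 {n : ℕ} (ν : Fin n → Fin n → ℝ) : Prop :=
  (∀ i j, 0 ≤ ν i j) ∧ ∑ i, ∑ j, ν i j = 1

def IsStat2 {n : ℕ} (ν : Fin n → Fin n → ℝ) : Prop :=
  ∀ i, ∑ j, ν i j = ∑ j, ν j i

/-- The set `M_s(A²)` of stationary probability distributions on `A²`. -/
def Ms2 (n : ℕ) : Set (Fin n → Fin n → ℝ) := {ν | IsProb2 ν ∧ IsStat2 ν}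

/-- Relative entropy of doublet distributions. -/
noncomputable def DKL2 {n : ℕ} (ν μ : Fin n → Fin n → ℝ) : ℝ :=
  ∑ i, ∑ j, ν i j * Real.log (ν i j / μ i j)

/-- Relative entropy of probability vectors. -/
noncomputable def DKL1 {n : ℕ} (p q : Fin n → ℝ) : ℝ := ∑ i, p i * Real.log (p i / q i)

/-- Conditional relative entropy `D_c(ν‖μ) = D(ν‖μ) − D(ν̄‖μ̄)`. -/
noncomputable def Dc {n : ℕ} (ν μ : Fin n → Fin n → ℝ) : ℝ :=
  DKL2 ν μ - DKL1 (marg ν) (marg μ)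

/-!
Weak duality: for stationary `ν` with marginal `φ` and `u > 0`, stationarity turns
`∑ ν_ij log u_j` into `∑ φ_j log u_j`, so that `D_c(ν‖μ) - ∑ φ_i log (u_i / (Au)_i)` equals
`∑ ν_ij log (ν_ij / q_ij)` with `q_ij = φ_i a_ij u_j / (Au)_i`. Since `q` has the same row sums
as `ν`, this is nonnegative by `log x ≤ x - 1`.

Strong duality: the objective is invariant under scaling `u`, and after normalising `max u = 1`
a positive lower bound on `a_ij` traps its superlevel sets in a compact box, so it attains its
maximum at some `w` that is positive exactly on the support of `φ`. The first-order conditions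
at `w` say that the column sums of `q(w)` are `φ`, so `ν = q(w)` is a competitor with
`D_c(ν‖μ)` equal to the value at `w`; that value is the limit of the objective along the
positive vectors `w + ε`.
-/

open Real Filter Topology

section DualObjective

variable {ι : Type*}

def PositiveOnSupport (φ u : ι → ℝ) : Prop :=
  ∀ i, (φ i = 0 → u i = 0) ∧ (φ i ≠ 0 → 0 < u i)

namespace PositiveOnSupport

variable {φ u : ι → ℝ}

lemma nonneg (hu : PositiveOnSupport φ u) (i : ι) : 0 ≤ u i := by
  by_cases hi : φ i = 0
  · exact ((hu i).1 hi).ge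
  · exact ((hu i).2 hi).le

lemma smul (hu : PositiveOnSupport φ u) {c : ℝ} (hc : 0 < c) : PositiveOnSupport φ (c • u) :=
  fun i => ⟨fun hi => by simp [(hu i).1 hi], fun hi => mul_pos hc ((hu i).2 hi)⟩

end PositiveOnSupport

def supportBox (φ : ι → ℝ) (c : ℝ) : Set (ι → ℝ) :=
  Set.Icc (fun i => if φ i = 0 then 0 else exp (c / φ i)) (fun i => if φ i = 0 then 0 else 1)

lemma PositiveOnSupport.of_mem_supportBox {φ u : ι → ℝ} {c : ℝ} (hu : u ∈ supportBox φ c) :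
    PositiveOnSupport φ u := by
  intro i
  have h₁ := hu.1 i
  have h₂ := hu.2 i
  refine ⟨fun hi => ?_, fun hi => ?_⟩
  · simp only [hi, if_true] at h₁ h₂
    exact le_antisymm h₂ h₁
  · simp only [hi, if_false] at h₁
    exact (exp_pos _).trans_le h₁

lemma mem_supportBox {φ v : ι → ℝ} {c : ℝ} (hφ : ∀ i, 0 ≤ φ i) (hv : PositiveOnSupport φ v)
    (hv1 : ∀ i, v i ≤ 1) (hc : ∀ i, φ i ≠ 0 → c ≤ φ i * log (v i)) : v ∈ supportBox φ c := by
  refine ⟨fun i => ?_, fun i => ?_⟩ <;> by_cases hi : φ i = 0 <;> simp only [hi, if_true, if_false]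
  · exact hv.nonneg i
  · have hvi := (hv i).2 hi
    calc exp (c / φ i) ≤ exp (log (v i)) :=
          exp_le_exp.2 ((div_le_iff₀' ((hφ i).lt_of_ne' hi)).2 (hc i hi))
      _ = v i := exp_log hvi
  · exact ((hv i).1 hi).le
  · exact hv1 i

variable [Fintype ι]

noncomputable def dualObjective (a : ι → ι → ℝ) (φ u : ι → ℝ) : ℝ :=
  ∑ i, φ i * log (u i / ∑ j, a i j * u j)

noncomputable def tilt (a : ι → ι → ℝ) (φ u : ι → ℝ) (i j : ι) : ℝ :=
  φ i * a i j * u j / ∑ l, a i l * u l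

lemma sum_mul_pos_of_pos {a : ι → ι → ℝ} (ha : ∀ i j, 0 < a i j) {u : ι → ℝ}
    (hu : ∀ j, 0 ≤ u j) {k : ι} (hk : 0 < u k) (i : ι) : 0 < ∑ j, a i j * u j :=
  sum_pos' (fun j _ => mul_nonneg (ha i j).le (hu j)) ⟨k, mem_univ k, mul_pos (ha i k) hk⟩

lemma PositiveOnSupport.sum_mul_pos {a : ι → ι → ℝ} (ha : ∀ i j, 0 < a i j) {φ u : ι → ℝ}
    (hu : PositiveOnSupport φ u) {k : ι} (hk : φ k ≠ 0) (i : ι) : 0 < ∑ j, a i j * u j :=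
  sum_mul_pos_of_pos ha hu.nonneg ((hu k).2 hk) i

lemma dualObjective_smul (a : ι → ι → ℝ) (φ u : ι → ℝ) {c : ℝ} (hc : c ≠ 0) :
    dualObjective a φ (c • u) = dualObjective a φ u := by
  simp only [dualObjective, Pi.smul_apply, smul_eq_mul, mul_left_comm _ c, ← mul_sum,
    mul_div_mul_left _ _ hc]

lemma sum_tilt_apply {a : ι → ι → ℝ} {φ u : ι → ℝ} {i : ι} (hi : ∑ j, a i j * u j ≠ 0) :
    ∑ j, tilt a φ u i j = φ i := by
  simp only [tilt, ← sum_div, mul_assoc, ← mul_sum]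
  exact mul_div_cancel_right₀ _ hi

lemma continuousAt_dualObjective {a : ι → ι → ℝ} (ha : ∀ i j, 0 < a i j) {φ w : ι → ℝ}
    (hw : PositiveOnSupport φ w) : ContinuousAt (dualObjective a φ) w := by
  refine tendsto_finsetSum _ fun i _ => ?_
  by_cases hi : φ i = 0
  · simp only [hi, zero_mul]
    exact continuousAt_const
  have hA := hw.sum_mul_pos ha hi i
  refine continuousAt_const.mul (ContinuousAt.log ?_ (div_pos ((hw i).2 hi) hA).ne')
  exact (continuous_apply i).continuousAt.div
    (continuous_finsetSum _ fun j _ => continuous_const.mul (continuous_apply j)).continuousAt hA.ne'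

lemma tilt_nonneg {a : ι → ι → ℝ} (ha : ∀ i j, 0 < a i j) {φ u : ι → ℝ} (hφ : ∀ i, 0 ≤ φ i)
    (hu : ∀ j, 0 ≤ u j) (i j : ι) : 0 ≤ tilt a φ u i j :=
  div_nonneg (mul_nonneg (mul_nonneg (hφ i) (ha i j).le) (hu j))
    (sum_nonneg fun l _ => mul_nonneg (ha i l).le (hu l))

lemma dualObjective_add_log_le {a : ι → ι → ℝ} {a₀ : ℝ} (ha₀ : 0 < a₀) (ha : ∀ i j, a₀ ≤ a i j)
    {φ u : ι → ℝ} (hφ : ∀ i, 0 ≤ φ i) (hφ1 : ∑ i, φ i = 1) (hu : PositiveOnSupport φ u)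
    (hu1 : ∀ i, u i ≤ 1) {k : ι} (hk : u k = 1) (i : ι) :
    dualObjective a φ u + log a₀ ≤ φ i * log (u i) := by
  classical
  have hterm : ∀ l, φ l * log (u l / ∑ j, a l j * u j) ≤ φ l * log (u l) - φ l * log a₀ := by
    intro l
    by_cases hl : φ l = 0
    · simp [hl]
    have hA : a₀ ≤ ∑ j, a l j * u j :=
      calc a₀ = a₀ * u k := by rw [hk, mul_one]
        _ ≤ a l k * u k := mul_le_mul_of_nonneg_right (ha l k) (hu.nonneg k)
        _ ≤ ∑ j, a l j * u j :=
          single_le_sum (fun j _ => mul_nonneg (ha₀.trans_le (ha l j)).le (hu.nonneg j))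
            (mem_univ k)
    rw [log_div ((hu l).2 hl).ne' (ha₀.trans_le hA).ne', ← mul_sub]
    exact mul_le_mul_of_nonneg_left (by linarith [log_le_log ha₀ hA]) (hφ l)
  have hrest : ∑ l ∈ univ.erase i, φ l * log (u l) ≤ 0 :=
    sum_nonpos fun l _ => mul_nonpos_of_nonneg_of_nonpos (hφ l) (log_nonpos (hu.nonneg l) (hu1 l))
  calc dualObjective a φ u + log a₀
      ≤ ∑ l, (φ l * log (u l) - φ l * log a₀) + log a₀ := by
        unfold dualObjective; linarith [sum_le_sum fun l (_ : l ∈ univ) => hterm l]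
    _ = ∑ l, φ l * log (u l) := by rw [sum_sub_distrib, ← sum_mul, hφ1]; ring
    _ ≤ φ i * log (u i) := by rw [← add_sum_erase _ _ (mem_univ i)]; linarith

lemma exists_isMaxOn_dualObjective {a : ι → ι → ℝ} (ha : ∀ i j, 0 < a i j) {φ : ι → ℝ}
    (hφ : ∀ i, 0 ≤ φ i) (hφ1 : ∑ i, φ i = 1) :
    ∃ w, PositiveOnSupport φ w ∧ IsMaxOn (dualObjective a φ) {u | PositiveOnSupport φ u} w := by
  obtain ⟨i₀, -, hi₀⟩ := exists_ne_zero_of_sum_ne_zero (hφ1.trans_ne one_ne_zero)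
  have : Nonempty ι := ⟨i₀⟩
  obtain ⟨p, hp⟩ := Finite.exists_min fun p : ι × ι => a p.1 p.2
  have hbound {u : ι → ℝ} (hu : PositiveOnSupport φ u) (hu1 : ∀ i, u i ≤ 1) {k : ι}
      (hk : u k = 1) (i : ι) : dualObjective a φ u + log (a p.1 p.2) ≤ φ i * log (u i) :=
    dualObjective_add_log_le (ha p.1 p.2) (fun i j => hp (i, j)) hφ hφ1 hu hu1 hk i
  set s : ι → ℝ := fun i => if φ i = 0 then 0 else 1
  have hs : PositiveOnSupport φ s := fun i => by by_cases hi : φ i = 0 <;> simp [s, hi]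
  have hs1 : ∀ i, s i ≤ 1 := fun i => by by_cases hi : φ i = 0 <;> simp [s, hi]
  set c := dualObjective a φ s + log (a p.1 p.2)
  -- Up to scaling, every `v` with `dualObjective a φ s ≤ dualObjective a φ v` lies in this box.
  have hsK : s ∈ supportBox φ c := mem_supportBox hφ hs hs1 fun i hi => by
    simpa [s, hi, hi₀, c] using hbound hs hs1 (k := i₀) (by simp [s, hi₀]) i₀
  obtain ⟨w, hwK, hw⟩ := isCompact_Icc.exists_isMaxOn ⟨s, hsK⟩ fun u hu =>
    (continuousAt_dualObjective ha (.of_mem_supportBox hu)).continuousWithinAt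
  refine ⟨w, .of_mem_supportBox hwK, fun u (hu : PositiveOnSupport φ u) => ?_⟩
  obtain ⟨k, hk⟩ := Finite.exists_max u
  have huk : 0 < u k := ((hu i₀).2 hi₀).trans_le (hk i₀)
  set v := (u k)⁻¹ • u
  have hv : PositiveOnSupport φ v := hu.smul (inv_pos.2 huk)
  have hv1 : ∀ i, v i ≤ 1 := fun i => (inv_mul_le_one₀ huk).2 (hk i)
  have hvk : v k = 1 := inv_mul_cancel₀ huk.ne'
  show dualObjective a φ u ≤ dualObjective a φ w
  rw [← dualObjective_smul a φ u (inv_ne_zero huk.ne')]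
  by_cases hlow : dualObjective a φ v < dualObjective a φ s
  · exact hlow.le.trans (hw hsK)
  · refine hw (mem_supportBox hφ hv hv1 fun i _ => ?_)
    linarith [hbound hv hv1 hvk i]

lemma hasDerivAt_dualObjective_add_smul {a : ι → ι → ℝ} {φ w : ι → ℝ} (e : ι → ℝ)
    (hw : ∀ i, φ i ≠ 0 → w i ≠ 0 ∧ ∑ j, a i j * w j ≠ 0) :
    HasDerivAt (fun t : ℝ => dualObjective a φ (w + t • e))
      (∑ i, φ i * (e i / w i - (∑ j, a i j * e j) / ∑ j, a i j * w j)) 0 := by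
  refine HasDerivAt.fun_sum fun i _ => ?_
  by_cases hi : φ i = 0
  · simp only [hi, zero_mul]
    exact hasDerivAt_const _ _
  obtain ⟨hwi, hAi⟩ := hw i hi
  have hnum : HasDerivAt (fun t : ℝ => (w + t • e) i) (e i) 0 := by
    simpa using ((hasDerivAt_id (0 : ℝ)).mul_const (e i)).const_add (w i)
  have hden : HasDerivAt (fun t : ℝ => ∑ j, a i j * (w + t • e) j) (∑ j, a i j * e j) 0 :=
    HasDerivAt.fun_sum fun j _ => by
      simpa using (((hasDerivAt_id (0 : ℝ)).mul_const (e j)).const_add (w j)).const_mul (a i j)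
  refine (((hnum.fun_div hden (by simpa using hAi)).log
    (by simpa using div_ne_zero hwi hAi)).const_mul (φ i)).congr_deriv ?_
  simp only [zero_smul, add_zero]
  field_simp

lemma sum_tilt_eq_of_isMaxOn {a : ι → ι → ℝ} (ha : ∀ i j, 0 < a i j) {φ w : ι → ℝ}
    (hw : PositiveOnSupport φ w) (hmax : IsMaxOn (dualObjective a φ) {u | PositiveOnSupport φ u} w)
    (k : ι) : ∑ i, tilt a φ w i k = φ k := by
  classical
  by_cases hk : φ k = 0
  · simp [tilt, (hw k).1 hk, hk]
  have hwk := (hw k).2 hk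
  have hA := hw.sum_mul_pos ha hk
  have hline : ∀ t, -w k < t → PositiveOnSupport φ (w + t • Pi.single k 1) := by
    intro t ht i
    rcases eq_or_ne i k with rfl | hik
    · simp only [Pi.add_apply, Pi.smul_apply, Pi.single_eq_same, smul_eq_mul, mul_one]
      exact ⟨fun h => absurd h hk, fun _ => by linarith⟩
    · simpa [Pi.single_eq_of_ne hik] using hw i
  have hlocal : IsLocalMax (fun t : ℝ => dualObjective a φ (w + t • Pi.single k 1)) 0 := by
    filter_upwards [eventually_gt_nhds (neg_neg_of_pos hwk)] with t ht
    simpa using hmax (hline t ht)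
  have hzero := hlocal.hasDerivAt_eq_zero
    (hasDerivAt_dualObjective_add_smul _ fun i hi => ⟨((hw i).2 hi).ne', (hA i).ne'⟩)
  simp only [Pi.single_apply, mul_ite, mul_one, mul_zero, ite_div, zero_div, mul_sub,
    sum_sub_distrib, sum_ite_eq', mem_univ, if_true] at hzero
  calc ∑ i, tilt a φ w i k = w k * ∑ i, φ i * (a i k / ∑ j, a i j * w j) := by
        rw [mul_sum]
        exact sum_congr rfl fun i _ => by unfold tilt; ring
    _ = φ k := by rw [← sub_eq_zero.1 hzero]; field_simp

lemma coe_dualObjective_le_iSup {a : ι → ι → ℝ} (ha : ∀ i j, 0 < a i j) {φ w : ι → ℝ}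
    (hw : PositiveOnSupport φ w) :
    ((dualObjective a φ w : ℝ) : EReal)
      ≤ ⨆ u ∈ {u : ι → ℝ | ∀ i, 0 < u i}, ((dualObjective a φ u : ℝ) : EReal) := by
  have hpath : Tendsto (fun ε : ℝ => w + ε • 1) (𝓝 0) (𝓝 w) := by
    have : Continuous fun ε : ℝ => w + ε • 1 := by fun_prop
    simpa using this.tendsto 0
  have hlim := ((continuousAt_dualObjective ha hw).tendsto.comp hpath).mono_left
    (nhdsWithin_le_nhds (s := Set.Ioi 0))
  refine le_of_tendsto (EReal.tendsto_coe.2 hlim) (eventually_nhdsWithin_of_forall fun ε hε => ?_)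
  refine le_iSup₂_of_le (f := fun u (_ : u ∈ {u : ι → ℝ | ∀ i, 0 < u i}) =>
    ((dualObjective a φ u : ℝ) : EReal)) _ (fun i => ?_) le_rfl
  simpa using add_pos_of_nonneg_of_pos (hw.nonneg i) hε

end DualObjective

lemma sub_le_mul_log_div {x y : ℝ} (hx : 0 < x) (hy : 0 < y) : x - y ≤ x * log (x / y) := by
  have h := one_sub_inv_le_log_of_pos (div_pos hx hy)
  rw [inv_div] at h
  calc x - y = x * (1 - y / x) := by field_simp
    _ ≤ x * log (x / y) := mul_le_mul_of_nonneg_left h hx.le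

section Doublet

variable {n : ℕ}

lemma marg_pos {μ : Fin n → Fin n → ℝ} (hμ : ∀ i j, 0 < μ i j) (i : Fin n) : 0 < marg μ i :=
  sum_pos (fun j _ => hμ i j) ⟨i, mem_univ i⟩

noncomputable def transition (μ : Fin n → Fin n → ℝ) (i j : Fin n) : ℝ := μ i j / marg μ i

lemma transition_pos {μ : Fin n → Fin n → ℝ} (hμ : ∀ i j, 0 < μ i j) (i j : Fin n) :
    0 < transition μ i j :=
  div_pos (hμ i j) (marg_pos hμ i)

lemma marg_nonneg {ν : Fin n → Fin n → ℝ} (hν : ∀ i j, 0 ≤ ν i j) (i : Fin n) : 0 ≤ marg ν i :=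
  sum_nonneg fun j _ => hν i j

lemma le_marg {ν : Fin n → Fin n → ℝ} (hν : ∀ i j, 0 ≤ ν i j) (i j : Fin n) : ν i j ≤ marg ν i :=
  single_le_sum (fun k _ => hν i k) (mem_univ j)

lemma sum_marg_mul (ν : Fin n → Fin n → ℝ) (f : Fin n → ℝ) :
    ∑ i, marg ν i * f i = ∑ i, ∑ j, ν i j * f i :=
  sum_congr rfl fun _ _ => sum_mul _ _ _

lemma IsStat2.sum_marg_mul {ν : Fin n → Fin n → ℝ} (hν : IsStat2 ν) (f : Fin n → ℝ) :
    ∑ i, marg ν i * f i = ∑ i, ∑ j, ν i j * f j := by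
  rw [sum_comm]
  exact sum_congr rfl fun j _ => by rw [marg, hν j, sum_mul]

lemma IsStat2.le_marg {ν : Fin n → Fin n → ℝ} (hν : IsStat2 ν) (hν0 : ∀ i j, 0 ≤ ν i j)
    (i j : Fin n) : ν i j ≤ marg ν j := by
  rw [marg, hν j]
  exact single_le_sum (fun k _ => hν0 k j) (mem_univ i)

lemma Dc_eq_sum_mul_log {ν μ : Fin n → Fin n → ℝ} (hν : ∀ i j, 0 ≤ ν i j)
    (hμ : ∀ i j, 0 < μ i j) :
    Dc ν μ = ∑ i, ∑ j, ν i j * log (ν i j / (marg ν i * transition μ i j)) := by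
  rw [Dc, DKL2, DKL1, sum_marg_mul, ← sum_sub_distrib]
  refine sum_congr rfl fun i _ => ?_
  rw [← sum_sub_distrib]
  refine sum_congr rfl fun j _ => ?_
  rcases (hν i j).eq_or_lt with h | h
  · simp [← h]
  have hφ := h.trans_le (le_marg hν i j)
  rw [← mul_sub, ← log_div (div_pos h (hμ i j)).ne' (div_pos hφ (marg_pos hμ i)).ne']
  congr 2
  rw [transition]
  field_simp

lemma Dc_eq_dualObjective_add {ν μ : Fin n → Fin n → ℝ} (hν : ν ∈ Ms2 n) (hμ : ∀ i j, 0 < μ i j)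
    {u : Fin n → ℝ} (hu0 : ∀ j, 0 ≤ u j) (hu : ∀ j, marg ν j ≠ 0 → 0 < u j) :
    Dc ν μ = dualObjective (transition μ) (marg ν) u
      + ∑ i, ∑ j, ν i j * log (ν i j / tilt (transition μ) (marg ν) u i j) := by
  obtain ⟨⟨hν0, -⟩, hstat⟩ := hν
  rw [Dc_eq_sum_mul_log hν0 hμ]
  set a := transition μ
  have ha : ∀ i j, 0 < a i j := transition_pos hμ
  have hA : ∀ i, marg ν i ≠ 0 → 0 < ∑ l, a i l * u l := fun i hi =>
    sum_mul_pos_of_pos ha hu0 (hu i hi) i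
  have hobj : dualObjective a (marg ν) u
      = ∑ i, ∑ j, ν i j * (log (u j) - log (∑ l, a i l * u l)) :=
    calc dualObjective a (marg ν) u = ∑ i, marg ν i * (log (u i) - log (∑ l, a i l * u l)) := by
          refine sum_congr rfl fun i _ => ?_
          by_cases hi : marg ν i = 0
          · simp [hi]
          · rw [log_div (hu i hi).ne' (hA i hi).ne']
      _ = _ := by
          simp only [mul_sub, sum_sub_distrib]
          rw [hstat.sum_marg_mul, sum_marg_mul]
  rw [hobj, ← sum_add_distrib]
  refine sum_congr rfl fun i _ => ?_
  rw [← sum_add_distrib]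
  refine sum_congr rfl fun j _ => ?_
  rcases (hν0 i j).eq_or_lt with h | h
  · simp [← h]
  have hφi := h.trans_le (le_marg hν0 i j)
  have huj := hu j (h.trans_le (hstat.le_marg hν0 i j)).ne'
  have hAi := hA i hφi.ne'
  have htilt : 0 < tilt a (marg ν) u i j := div_pos (mul_pos (mul_pos hφi (ha i j)) huj) hAi
  rw [← mul_add, ← log_div huj.ne' hAi.ne', ← log_mul (div_pos huj hAi).ne' (div_pos h htilt).ne']
  congr 2
  have := (ha i j).ne'
  rw [tilt]
  field_simp

lemma dualObjective_le_Dc {ν μ : Fin n → Fin n → ℝ} (hν : ν ∈ Ms2 n) (hμ : ∀ i j, 0 < μ i j)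
    {u : Fin n → ℝ} (hu : ∀ i, 0 < u i) : dualObjective (transition μ) (marg ν) u ≤ Dc ν μ := by
  rw [Dc_eq_dualObjective_add hν hμ (fun j => (hu j).le) fun j _ => hu j, le_add_iff_nonneg_right]
  have hν0 := hν.1.1
  have ha := transition_pos hμ
  have hA : ∀ i, 0 < ∑ j, transition μ i j * u j := fun i =>
    sum_mul_pos_of_pos ha (fun j => (hu j).le) (hu i) i
  calc (0 : ℝ) = ∑ i, ∑ j, (ν i j - tilt (transition μ) (marg ν) u i j) := by
        simp only [sum_sub_distrib, sum_tilt_apply (hA _).ne', sub_self, marg, sum_const_zero]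
    _ ≤ _ := sum_le_sum fun i _ => sum_le_sum fun j _ => ?_
  rcases (hν0 i j).eq_or_lt with h | h
  · simpa [← h] using tilt_nonneg ha (marg_nonneg hν0) (fun j => (hu j).le) i j
  · exact sub_le_mul_log_div h
      (div_pos (mul_pos (mul_pos (h.trans_le (le_marg hν0 i j)) (ha i j)) (hu j)) (hA i))

lemma mem_Ms2_of_sum_eq {ν : Fin n → Fin n → ℝ} {φ : Fin n → ℝ} (hν : ∀ i j, 0 ≤ ν i j)
    (hrow : ∀ i, ∑ j, ν i j = φ i) (hcol : ∀ j, ∑ i, ν i j = φ j) (hφ : ∑ i, φ i = 1) :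
    ν ∈ Ms2 n ∧ marg ν = φ :=
  ⟨⟨⟨hν, by simp only [hrow, hφ]⟩, fun i => (hrow i).trans (hcol i).symm⟩, funext hrow⟩

end Doublet

theorem stmt18_general {n : ℕ} (μ : Fin n → Fin n → ℝ)
    (hpos : ∀ i j, 0 < μ i j)
    (φ : Fin n → ℝ) (hφ : φ ∈ simplex n) :
    (⨅ ν ∈ {ν : Fin n → Fin n → ℝ | ν ∈ Ms2 n ∧ marg ν = φ}, ((Dc ν μ : ℝ) : EReal))
      = ⨆ u ∈ {u : Fin n → ℝ | ∀ i, 0 < u i},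
          (((∑ i, φ i * Real.log (u i / ∑ j, (μ i j / marg μ i) * u j)) : ℝ) : EReal) := by
  obtain ⟨hφ0, hφ1⟩ := hφ
  have ha := transition_pos hpos
  obtain ⟨k, -, hk⟩ := exists_ne_zero_of_sum_ne_zero (hφ1.trans_ne one_ne_zero)
  obtain ⟨w, hw, hmax⟩ := exists_isMaxOn_dualObjective ha hφ0 hφ1
  set ν := tilt (transition μ) φ w
  have hν : ν ∈ Ms2 n ∧ marg ν = φ :=
    mem_Ms2_of_sum_eq (tilt_nonneg ha hφ0 hw.nonneg)
      (fun i => sum_tilt_apply (hw.sum_mul_pos ha hk i).ne') (sum_tilt_eq_of_isMaxOn ha hw hmax) hφ1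
  have hDc : Dc ν μ = dualObjective (transition μ) φ w := by
    rw [Dc_eq_dualObjective_add hν.1 hpos hw.nonneg fun j hj => (hw j).2 (hν.2 ▸ hj), hν.2]
    simp [ν]
  apply le_antisymm
  · calc _ ≤ ((Dc ν μ : ℝ) : EReal) := iInf₂_le ν hν
      _ ≤ _ := hDc ▸ coe_dualObjective_le_iSup ha hw
  · refine le_iInf₂ fun ν' hν' => iSup₂_le fun u hu => EReal.coe_le_coe_iff.2 ?_
    rw [← hν'.2]
    exact dualObjective_le_Dc hν'.1 hpos hu

/-- Let `μ ∈ M_s(A²)` be strictly positive with associated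
transition matrix `a_{ij} = μ_{ij}/μ̄_i`, and let `φ ∈ S_n`.  Then
`inf { D_c(ν‖μ) : ν ∈ M_s(A²), ν̄ = φ } = sup_{u>0} Σ_i φ_i log(u_i/(Au)_i)`, where
`(Au)_i = Σ_j a_{ij} u_j`. -/
theorem stmt18 {n : ℕ} (μ : Fin n → Fin n → ℝ)
    (hμ : μ ∈ Ms2 n) (hpos : ∀ i j, 0 < μ i j)
    (φ : Fin n → ℝ) (hφ : φ ∈ simplex n) :
    (⨅ ν ∈ {ν : Fin n → Fin n → ℝ | ν ∈ Ms2 n ∧ marg ν = φ}, ((Dc ν μ : ℝ) : EReal))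
      = ⨆ u ∈ {u : Fin n → ℝ | ∀ i, 0 < u i},
          (((∑ i, φ i * Real.log (u i / ∑ j, (μ i j / marg μ i) * u j)) : ℝ) : EReal) :=
  stmt18_general μ hpos φ hφ
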